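/- arXiv:2003.10072 — 3 statements merged into one kernel-verified Lean document; each statement's English description precedes it below -/
import Mathlib

section
/- Let V, U, R, S be polynomials over F_q with gcd(V,U) = 1 and gcd(R,S) = 1, such that the rational functions V/U and R/S both induce permutations π and σ of the projective line P¹(F_q) (with q+1 elements), and V·S − U·R is not a constant polynomial. If deg V + deg S ≤ d and deg U + deg R ≤ d, then the Hamming distance between π and σ is at least q − d, where the Hamming distance is the number of points x ∈ P¹(F_q) with π(x) ≠ σ(x). -/
/-!
Wherever `V/U` and `R/S` agree at a finite point `a`, cross-multiplying gives
`(V S - U R)(a) = 0`; this includes the case where both have a pole at `a`, since then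
`U(a) = S(a) = 0`. The nonzero polynomial `V S - U R` has degree at most `d`, so the two
maps agree on at most `d` points of `F`, hence differ on at least `|F| - d` of them.
-/

open Polynomial

open scoped Classical in
/-- Evaluation of the rational function `V/U` on the projective line
`P¹(F_q) = F_q ∪ {∞}`, modeled as `Option F` with `none = ∞`. -/
noncomputable def prfEval {F : Type*} [Field F] (V U : F[X]) : Option F → Option F
  | some a => if U.eval a = 0 then none else some (V.eval a / U.eval a)
  | none =>
    if U.natDegree < V.natDegree then none
    else if V.natDegree < U.natDegree then some 0
    else some (V.leadingCoeff / U.leadingCoeff)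

theorem Set.ncard_preimage_le_of_injective {α β : Type*} {f : α → β} (hf : f.Injective)
    (t : Set β) (ht : t.Finite := by toFinite_tac) :
    (f ⁻¹' t).ncard ≤ t.ncard :=
  Set.ncard_le_ncard_of_injOn f (fun _ ha => ha) hf.injOn ht

section

variable {F : Type*} [Field F]

theorem eval_mul_sub_mul_eq_zero_of_prfEval_eq {V U R S : F[X]} {a : F}
    (h : prfEval V U (some a) = prfEval R S (some a)) :
    (V * S - U * R).eval a = 0 := by
  simp only [prfEval] at h
  by_cases hU : U.eval a = 0 <;> by_cases hS : S.eval a = 0 <;>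
    simp only [hU, hS, if_true, if_false, reduceCtorEq, Option.some.injEq] at h
  · simp [hU, hS]
  · rw [div_eq_div_iff hU hS] at h
    simp only [eval_sub, eval_mul]
    linear_combination h

theorem natDegree_mul_sub_mul_le {V U R S : F[X]} {d : ℕ}
    (h1 : V.natDegree + S.natDegree ≤ d) (h2 : U.natDegree + R.natDegree ≤ d) :
    (V * S - U * R).natDegree ≤ d :=
  (natDegree_sub_le _ _).trans <|
    max_le (natDegree_mul_le.trans h1) (natDegree_mul_le.trans h2)

theorem card_sub_natDegree_le_ncard_of_eval_eq_zero [Fintype F] {W : F[X]} (hW : W ≠ 0)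
    {s : Set F} (h : ∀ a ∉ s, W.eval a = 0) :
    Fintype.card F - W.natDegree ≤ s.ncard := by
  classical
  have hroots : sᶜ.ncard ≤ W.natDegree := by
    calc sᶜ.ncard ≤ (W.roots.toFinset : Set F).ncard :=
          Set.ncard_le_ncard fun a ha => by simpa [mem_roots hW] using h a ha
      _ ≤ W.natDegree := by
          rw [Set.ncard_coe_finset]
          exact W.roots.toFinset_card_le.trans W.card_roots'
  have := Set.ncard_add_ncard_compl s
  rw [Nat.card_eq_fintype_card] at this
  omega

end

theorem stmt_1_general {F : Type*} [Field F] [Fintype F]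
    (V U R S : F[X]) (d : ℕ)
    (hnc : ∀ c : F, V * S - U * R ≠ C c)
    (h1 : V.natDegree + S.natDegree ≤ d)
    (h2 : U.natDegree + R.natDegree ≤ d) :
    Fintype.card F - d ≤ Set.ncard {x : Option F | prfEval V U x ≠ prfEval R S x} := by
  have hW : V * S - U * R ≠ 0 := by simpa using hnc 0
  calc Fintype.card F - d ≤ Fintype.card F - (V * S - U * R).natDegree :=
        Nat.sub_le_sub_left (natDegree_mul_sub_mul_le h1 h2) _
    _ ≤ (some ⁻¹' {x : Option F | prfEval V U x ≠ prfEval R S x}).ncard :=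
        card_sub_natDegree_le_ncard_of_eval_eq_zero hW fun a ha =>
          eval_mul_sub_mul_eq_zero_of_prfEval_eq (not_not.mp ha)
    _ ≤ _ := Set.ncard_preimage_le_of_injective (Option.some_injective F) _

theorem stmt_1 {F : Type*} [Field F] [Fintype F]
    (V U R S : F[X]) (d : ℕ)
    (hVU : IsCoprime V U) (hRS : IsCoprime R S)
    (hW : Function.Bijective (prfEval V U))
    (hY : Function.Bijective (prfEval R S))
    (hnc : ∀ c : F, V * S - U * R ≠ C c)
    (h1 : V.natDegree + S.natDegree ≤ d)
    (h2 : U.natDegree + R.natDegree ≤ d) :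
    Fintype.card F - d ≤ Set.ncard {x : Option F | prfEval V U x ≠ prfEval R S x} :=
  stmt_1_general V U R S d hnc h1 h2
end

section
/- Let F_{2^m} with m > 2, let i > 1, and let d be an even integer with 2^i ≤ d ≤ 2^{i+1} − 3. For any polynomial P(x) of degree d over F_{2^m}, there exists b ∈ F_{2^m} such that in P(x+b), the coefficient of x^{2^i−1} or the coefficient of x^{2^i−2} is zero. -/
open Polynomial

/-!
Let `n = 2 ^ i - 2`. The coefficient of `x ^ n` in `P(x + b)` is `∑ⱼ (j choose n) pⱼ b ^ (j - n)`,
and for `2 ^ i ≤ j ≤ deg P ≤ 2 ^ (i + 1) - 3` the binomial `j choose n` is even, so in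
characteristic 2 (where `n + 1` is odd) this coefficient is `pₙ + pₙ₊₁ b`. If `pₙ₊₁ = 0`, take
`b = 0` for the coefficient of `x ^ (n + 1)`; otherwise `b = pₙ / pₙ₊₁` kills that of `x ^ n`.
-/

theorem Nat.Prime.dvd_choose_pow_add {p : ℕ} (hp : p.Prime) {i r k : ℕ} (hrk : r < k)
    (hk : k < p ^ i) : p ∣ (p ^ i + r).choose k := by
  have := Fact.mk hp
  -- over `ZMod p`, `(X + 1) ^ (p ^ i + r) = (X ^ p ^ i + 1) * (X + 1) ^ r`
  rw [← ZMod.natCast_eq_zero_iff, ← coeff_X_add_one_pow (ZMod p), pow_add,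
    add_pow_char_pow, one_pow, add_mul, one_mul, coeff_add, coeff_X_pow_mul',
    if_neg (by omega), coeff_X_add_one_pow, Nat.choose_eq_zero_of_lt hrk, Nat.cast_zero, add_zero]

theorem Polynomial.hasseDeriv_eq_linear_of_choose_eq_zero {R : Type*} [Semiring R]
    (P : R[X]) (n : ℕ) (h : ∀ j, n + 2 ≤ j → j ≤ P.natDegree → (j.choose n : R) = 0) :
    hasseDeriv n P = C (P.coeff n) + C ((n + 1) * P.coeff (n + 1)) * X := by
  ext k
  rw [hasseDeriv_coeff]
  match k with
  | 0 => simp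
  | 1 => simp [add_comm 1 n]
  | k + 2 =>
    by_cases hk : k + 2 + n ≤ P.natDegree
    · simp [h _ (by omega) hk, coeff_one]
    · simp [coeff_eq_zero_of_natDegree_lt (not_le.mp hk), coeff_one]

theorem Polynomial.coeff_taylor_of_choose_eq_zero {R : Type*} [CommSemiring R]
    (P : R[X]) (n : ℕ) (b : R) (h : ∀ j, n + 2 ≤ j → j ≤ P.natDegree → (j.choose n : R) = 0) :
    (taylor b P).coeff n = P.coeff n + (n + 1) * P.coeff (n + 1) * b := by
  simp [taylor_coeff, hasseDeriv_eq_linear_of_choose_eq_zero P n h]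

theorem stmt_12_general {F : Type*} [Field F] [CharP F 2]
    (i d : ℕ) (hi : 1 < i) (hd2 : d ≤ 2 ^ (i + 1) - 3)
    (P : F[X]) (hP : P.natDegree = d) :
    ∃ b : F, (P.comp (X + C b)).coeff (2 ^ i - 1) = 0 ∨
      (P.comp (X + C b)).coeff (2 ^ i - 2) = 0 := by
  obtain ⟨n, hn⟩ : ∃ n, 2 ^ i = 2 * n + 2 :=
    ⟨2 ^ (i - 1) - 1, by
      rw [← Nat.two_pow_pred_add_two_pow_pred (by omega : 0 < i)]
      have := Nat.one_le_two_pow (n := i - 1)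
      omega⟩
  have hgap : ∀ j, 2 * n + 2 ≤ j → j ≤ P.natDegree → (j.choose (2 * n) : F) = 0 := by
    intro j hj hjd
    obtain ⟨r, rfl⟩ := Nat.exists_eq_add_of_le hj
    rw [← hn, CharP.cast_eq_zero_iff F 2]
    exact Nat.prime_two.dvd_choose_pow_add (by omega) (by omega)
  have h2n : ((2 * n : ℕ) : F) = 0 := (CharP.cast_eq_zero_iff F 2 _).mpr (dvd_mul_right 2 n)
  rw [hn, show 2 * n + 2 - 1 = 2 * n + 1 by omega, show 2 * n + 2 - 2 = 2 * n by omega]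
  by_cases h : P.coeff (2 * n + 1) = 0
  · exact ⟨0, Or.inl (by simpa using h)⟩
  refine ⟨P.coeff (2 * n) / P.coeff (2 * n + 1), Or.inr ?_⟩
  rw [← taylor_apply, coeff_taylor_of_choose_eq_zero P _ _ hgap, h2n, zero_add, one_mul,
    mul_div_cancel₀ _ h, CharTwo.add_self_eq_zero]

theorem stmt_12 {F : Type*} [Field F] [Fintype F] [CharP F 2]
    (m : ℕ) (hm : 2 < m) (hcard : Fintype.card F = 2 ^ m)
    (i d : ℕ) (hi : 1 < i) (hde : Even d) (hd1 : 2 ^ i ≤ d) (hd2 : d ≤ 2 ^ (i + 1) - 3)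
    (P : F[X]) (hP : P.natDegree = d) :
    ∃ b : F, (P.comp (X + C b)).coeff (2 ^ i - 1) = 0 ∨
      (P.comp (X + C b)).coeff (2 ^ i - 2) = 0 :=
  stmt_12_general i d hi hd2 P hP
end

section
/- For permutations of P¹(F_q) induced by distinct permutation rational functions W = V/U and Y = R/S with deg V, deg R ≤ (d+1)/2 and deg U, deg S ≤ (d+1)/2 for some d < q−1 (and V·S − U·R not constant), the induced permutations are distinct; hence the number of distinct permutations of P¹(F_q) arising from such PRFs equals the number of such PRFs, and this family has pairwise Hamming distance at least q − d − 1 ≥ 1. -/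
open Polynomial

open scoped Classical in
/-- The inversion map `x ↦ x⁻¹` of `P¹(F_q)`, with `0 ↦ ∞` and `∞ ↦ 0`. -/
noncomputable def invP1 {F : Type*} [Field F] : Option F → Option F
  | some a => if a = 0 then none else some a⁻¹
  | none => some 0

/-! Cross-multiplying, `V/U` and `R/S` can agree at a point `a ∈ F` only if `a` is a root of
`V * S - U * R`, a nonzero polynomial of degree at most `d + 1`; so the two induced permutations
differ at no fewer than `q - (d + 1)` points, which is positive. -/

namespace Polynomial

theorem ncard_setOf_isRoot_le {R : Type*} [CommRing R] [IsDomain R] {p : R[X]} (hp : p ≠ 0) :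
    {a : R | p.IsRoot a}.ncard ≤ p.natDegree := by
  classical
  have hroots : {a : R | p.IsRoot a} = ↑p.roots.toFinset := by
    ext a
    simp [mem_roots hp]
  rw [hroots, Set.ncard_coe_finset]
  exact p.roots.toFinset_card_le.trans (card_roots' p)

theorem card_sub_natDegree_le_ncard_setOf_eval_ne_zero {R : Type*} [CommRing R] [IsDomain R]
    [Finite R] {p : R[X]} (hp : p ≠ 0) :
    Nat.card R - p.natDegree ≤ {a : R | p.eval a ≠ 0}.ncard := by
  have hcompl : {a : R | p.eval a ≠ 0} = {a : R | p.IsRoot a}ᶜ := rfl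
  rw [hcompl, Set.ncard_compl]
  have := ncard_setOf_isRoot_le hp
  omega

theorem natDegree_mul_sub_mul_le {R : Type*} [CommRing R] {V U R' S : R[X]} {n : ℕ}
    (hV : V.natDegree ≤ n) (hU : U.natDegree ≤ n) (hR : R'.natDegree ≤ n)
    (hS : S.natDegree ≤ n) :
    (V * S - U * R').natDegree ≤ 2 * n :=
  (natDegree_sub_le _ _).trans <| max_le
    (natDegree_mul_le.trans (by omega)) (natDegree_mul_le.trans (by omega))

end Polynomial

section prfEval

variable {F : Type*} [Field F]

theorem card_sub_natDegree_le_ncard_prfEval_ne [Finite F] {V U R S : F[X]}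
    (hP : V * S - U * R ≠ 0) :
    Nat.card F - (V * S - U * R).natDegree ≤
      {x : Option F | prfEval V U x ≠ prfEval R S x}.ncard := by
  have hsub : some '' {a : F | (V * S - U * R).eval a ≠ 0} ⊆
      {x : Option F | prfEval V U x ≠ prfEval R S x} := by
    rintro _ ⟨a, ha, rfl⟩ heq
    exact ha (eval_mul_sub_mul_eq_zero_of_prfEval_eq heq)
  calc Nat.card F - (V * S - U * R).natDegree
      ≤ {a : F | (V * S - U * R).eval a ≠ 0}.ncard :=
        card_sub_natDegree_le_ncard_setOf_eval_ne_zero hP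
    _ = (some '' {a : F | (V * S - U * R).eval a ≠ 0}).ncard :=
        (Set.ncard_image_of_injective _ (Option.some_injective F)).symm
    _ ≤ _ := Set.ncard_le_ncard hsub

end prfEval

theorem stmt_19_general {F : Type*} [Field F] [Fintype F]
    (V U R S : F[X]) (d : ℕ)
    (hnc : ∀ c : F, V * S - U * R ≠ C c)
    (hdV : V.natDegree ≤ (d + 1) / 2) (hdR : R.natDegree ≤ (d + 1) / 2)
    (hdU : U.natDegree ≤ (d + 1) / 2) (hdS : S.natDegree ≤ (d + 1) / 2)
    (hd : d < Fintype.card F - 1) :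
    prfEval V U ≠ prfEval R S ∧
    Fintype.card F - d - 1 ≤ Set.ncard {x : Option F | prfEval V U x ≠ prfEval R S x} ∧
    1 ≤ Fintype.card F - d - 1 := by
  have hdeg : (V * S - U * R).natDegree ≤ d + 1 :=
    (natDegree_mul_sub_mul_le hdV hdU hdR hdS).trans (Nat.mul_div_le (d + 1) 2)
  have hdist : Fintype.card F - d - 1 ≤
      Set.ncard {x : Option F | prfEval V U x ≠ prfEval R S x} := by
    have := card_sub_natDegree_le_ncard_prfEval_ne (by simpa using hnc 0)
    rw [Nat.card_eq_fintype_card] at this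
    omega
  refine ⟨fun heq => ?_, hdist, by omega⟩
  simp only [heq, ne_eq, not_true_eq_false, Set.ofPred_false, Set.ncard_empty] at hdist
  omega

theorem stmt_19 {F : Type*} [Field F] [Fintype F]
    (V U R S : F[X]) (d : ℕ)
    (hVU : IsCoprime V U) (hRS : IsCoprime R S)
    (hW : Function.Bijective (prfEval V U))
    (hY : Function.Bijective (prfEval R S))
    (hnc : ∀ c : F, V * S - U * R ≠ C c)
    (hdV : V.natDegree ≤ (d + 1) / 2) (hdR : R.natDegree ≤ (d + 1) / 2)
    (hdU : U.natDegree ≤ (d + 1) / 2) (hdS : S.natDegree ≤ (d + 1) / 2)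
    (hd : d < Fintype.card F - 1) :
    prfEval V U ≠ prfEval R S ∧
    Fintype.card F - d - 1 ≤ Set.ncard {x : Option F | prfEval V U x ≠ prfEval R S x} ∧
    1 ≤ Fintype.card F - d - 1 :=
  stmt_19_general V U R S d hnc hdV hdR hdU hdS hd
end
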